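/- For every n ∈ ℕ, the word w_n = b^{n+1}(ab)^n b^{2n+1} a^{2n+1} has length 7n+3 and satisfies S_d(w_n) ≥ 3n+1. -/

import Mathlib

/-- A word over {a,b} is modeled as a `List Bool` (`true` = a, `false` = b). -/
def Pal (w : List Bool) : Prop := w.reverse = w

/-- Antipalindrome: `a_i ≠ a_{n-i+1}` for all `i`, i.e. letterwise negation equals reversal. -/
def Antipal (w : List Bool) : Prop := w.map (!·) = w.reverse

/-- Minimal number of deletions turning `w` into a palindrome or antipalindrome. -/
noncomputable def Sd (w : List Bool) : ℕ :=
  sInf {k | ∃ v : List Bool, v.Sublist w ∧ (Pal v ∨ Antipal v) ∧ w.length = v.length + k}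

/-- Maximal `Sd w` over words of length `n`. -/
noncomputable def SdN (n : ℕ) : ℕ :=
  sSup {m | ∃ w : List Bool, w.length = n ∧ Sd w = m}

/-- The word $w_n = b^{n+1}(ab)^n b^{2n+1} a^{2n+1}$ (a = true, b = false). -/
def W (n : ℕ) : List Bool :=
  List.replicate (n+1) false ++ (List.replicate n [true, false]).flatten ++
    List.replicate (2*n+1) false ++ List.replicate (2*n+1) true

open List


open List

abbrev AB (n : ℕ) : List Bool := (List.replicate n [true, false]).flatten

lemma AB_succ (n : ℕ) : AB (n+1) = true :: false :: AB n := by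
  simp [AB, List.replicate_succ]

lemma count_true_AB (n : ℕ) : count true (AB n) = n := by
  induction n with
  | zero => simp [AB]
  | succ n ih => simp [AB_succ, ih]

lemma count_false_AB (n : ℕ) : count false (AB n) = n := by
  induction n with
  | zero => simp [AB]
  | succ n ih => simp [AB_succ, ih]

lemma length_AB (n : ℕ) : (AB n).length = 2*n := by
  induction n with
  | zero => simp [AB]
  | succ n ih => simp [AB_succ, ih]; omega

lemma length_count (l : List Bool) : l.length = count true l + count false l := by
  induction l with
  | nil => simp
  | cons c t ih =>
    cases c
    · rw [List.length_cons, List.count_cons_self, List.count_cons_of_ne (by simp)]; omega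
    · rw [List.length_cons, List.count_cons_self, List.count_cons_of_ne (by simp)]; omega

lemma count_map_not (l : List Bool) : count true (l.map (!·)) = count false l := by
  induction l with
  | nil => simp
  | cons c t ih => cases c <;> simp [ih]

lemma length_sub_le (l m : List Bool) (h : l.Sublist m) : l.length ≤ m.length := h.length_le

/-- extract maximal leading run -/
lemma run_extract : ∀ (v : List Bool) (c : Bool), v.head? = some c →
    ∃ x rest, 1 ≤ x ∧ v = List.replicate x c ++ rest ∧ rest.head? ≠ some c := by
  intro v
  induction v with
  | nil => intro c h; simp at h
  | cons d t ih =>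
    intro c h
    simp at h; subst h
    by_cases ht : t.head? = some d
    · obtain ⟨x, rest, hx, heq, hh⟩ := ih d ht
      exact ⟨x+1, rest, by omega, by simp [List.replicate_succ, heq], hh⟩
    · exact ⟨1, t, le_refl _, by simp [List.replicate_succ], ht⟩

/-- push an equation past a replicate block (the distinguished letter differs) -/
lemma repSplit {c d : Bool} (hcd : d ≠ c) : ∀ (q : ℕ) (T P S : List Bool),
    P ++ d :: S = List.replicate q c ++ T → ∃ P', P = List.replicate q c ++ P' ∧ P' ++ d :: S = T := by
  intro q
  induction q with
  | zero => intro T P S h; exact ⟨P, by simp, by simpa using h⟩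
  | succ q ih =>
    intro T P S h
    rw [List.replicate_succ] at h
    cases P with
    | nil => simp at h; exact absurd h.1 hcd
    | cons p P₂ =>
      simp at h
      obtain ⟨hp, h2⟩ := h
      obtain ⟨P', h3, h4⟩ := ih T P₂ S h2
      exact ⟨P', by simp [List.replicate_succ, hp, h3], h4⟩

/-- a `true` inside `AB m ++ T` : either it's one of the `AB` trues, or it's in `T`. -/
lemma A3M : ∀ (m : ℕ) (T P S : List Bool), P ++ true :: S = AB m ++ T →
    (∃ k, k < m ∧ P = AB (m - 1 - k) ∧ S = false :: AB k ++ T) ∨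
    (∃ P', P = AB m ++ P' ∧ P' ++ true :: S = T) := by
  intro m
  induction m with
  | zero => intro T P S h; right; exact ⟨P, by simp [AB], by simpa [AB] using h⟩
  | succ m ih =>
    intro T P S h
    rw [AB_succ] at h
    cases P with
    | nil =>
      simp at h
      left; exact ⟨m, by omega, by simp [AB], by simp [h]⟩
    | cons p P₂ =>
      simp at h
      obtain ⟨hp, h2⟩ := h
      cases P₂ with
      | nil => simp at h2
      | cons q P₃ =>
        simp at h2
        obtain ⟨hq, h3⟩ := h2
        rcases ih T P₃ S h3 with ⟨k, hk, hP, hS⟩ | ⟨P', hP, hT⟩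
        · left
          refine ⟨k, by omega, ?_, hS⟩
          have : m + 1 - 1 - k = (m - 1 - k) + 1 := by omega
          rw [this, AB_succ]
          simp [hp, hq, hP]
        · right
          exact ⟨P', by simp [AB_succ, hp, hq, hP], hT⟩

/-- first occurrence split of a cons-sublist -/
lemma first_occ {c : Bool} : ∀ (w u : List Bool), (c :: u).Sublist w →
    ∃ w1 w2, w = w1 ++ c :: w2 ∧ u.Sublist w2 := by
  intro w
  induction w with
  | nil => intro u h; simp at h
  | cons d w' ih =>
    intro u h
    by_cases hdc : d = c
    · subst hdc
      have hu : u.Sublist w' := by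
        cases h with
        | cons _ h' => exact (List.sublist_cons_self d u).trans h'
        | cons_cons _ h' => exact h'
      exact ⟨[], w', by simp, hu⟩
    · have h' : (c :: u).Sublist w' := by
        cases h with
        | cons _ h' => exact h'
        | cons_cons _ h' => exact absurd rfl hdc
      obtain ⟨w1, w2, heq, hu⟩ := ih u h'
      exact ⟨d :: w1, w2, by simp [heq], hu⟩

/-- trim a replicate head block from a sublist whose head differs -/
lemma trim_head {c : Bool} : ∀ (L : ℕ) (Z s : List Bool), s.Sublist (List.replicate L c ++ Z) →
    s.head? ≠ some c → s.Sublist Z := by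
  intro L
  induction L with
  | zero => intro Z s h _; simpa using h
  | succ L ih =>
    intro Z s h hh
    rw [List.replicate_succ] at h
    rcases List.sublist_cons_iff.mp h with h' | ⟨r, hr, h'⟩
    · exact ih Z s h' hh
    · rw [hr] at hh; simp at hh
/-- trim a replicate tail block from a sublist whose last letter differs -/
lemma trim_last {c : Bool} (L : ℕ) (X t : List Bool) (h : t.Sublist (X ++ List.replicate L c))
    (hh : t.reverse.head? ≠ some c) : t.Sublist X := by
  have h2 : t.reverse.Sublist (List.replicate L c ++ X.reverse) := by
    have := (List.reverse_sublist (l₁ := t) (l₂ := X ++ List.replicate L c)).mpr h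
    simpa [List.reverse_append] using this
  have := trim_head L X.reverse t.reverse h2 hh
  have := (List.reverse_sublist (l₁ := t.reverse) (l₂ := X.reverse)).mpr this
  simpa using this


lemma AB_join (n : ℕ) : (List.replicate n [true, false]).flatten = AB n := rfl

/-- a true whose suffix contains a false, inside `rep i b ++ AB m ++ rep K b ++ rep L a`,
    must be an AB-true. -/
lemma STEP (i m K L : ℕ) (r : List Bool)
    (h : (true :: r).Sublist
      (List.replicate i false ++ (AB m ++ (List.replicate K false ++ List.replicate L true))))
    (hf : false ∈ r) :
    ∃ k, k < m ∧ r.Sublist (false :: AB k ++ (List.replicate K false ++ List.replicate L true)) := by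
  obtain ⟨w1, w2, heq, hr⟩ := first_occ _ r h
  obtain ⟨P₁, hP₁, h2⟩ := repSplit (by simp) i _ w1 w2 heq.symm
  rcases A3M m _ P₁ w2 h2 with ⟨k, hk, _, hS⟩ | ⟨P', _, h3⟩
  · exact ⟨k, hk, by rw [hS] at hr; simpa using hr⟩
  · exfalso
    obtain ⟨P'', _, h4⟩ := repSplit (by simp) K _ P' w2 h3
    -- h4 : P'' ++ true :: w2 = replicate L true ; so w2 is all-true, but false ∈ r ⊆ w2
    have hw2 : w2 = List.replicate (L - (P''.length + 1)) true := by
      have h6 := congrArg (List.drop (P''.length + 1)) h4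
      have h5 : List.drop (P''.length + 1) P'' = [] := List.drop_eq_nil_of_le (by omega)
      simpa [List.drop_append, List.drop_replicate, h5] using h6
    have hmem : false ∈ w2 := hr.subset hf
    rw [hw2] at hmem
    exact absurd (List.eq_of_mem_replicate hmem) (by simp)
/-- iterated STEP : a block of a's followed by something containing a b -/
lemma abLoop (K L : ℕ) : ∀ (x : ℕ) (i m : ℕ) (u : List Bool), 1 ≤ x →
    (List.replicate x true ++ u).Sublist
      (List.replicate i false ++ (AB m ++ (List.replicate K false ++ List.replicate L true))) →
    false ∈ u →
    ∃ k, k + x ≤ m ∧ u.Sublist (false :: AB k ++ (List.replicate K false ++ List.replicate L true)) := by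
  intro x
  induction x with
  | zero => omega
  | succ x ih =>
    intro i m u _ h hf
    rw [List.replicate_succ] at h
    cases Nat.eq_zero_or_pos x with
    | inl hx0 =>
      subst hx0
      simp at h
      obtain ⟨k, hk, hsub⟩ := STEP i m K L u h hf
      exact ⟨k, by omega, hsub⟩
    | inr hx1 =>
      have h' : (true :: (List.replicate x true ++ u)).Sublist
          (List.replicate i false ++ (AB m ++ (List.replicate K false ++ List.replicate L true))) := by
        simpa using h
      have hf' : false ∈ List.replicate x true ++ u := by simp [hf]
      obtain ⟨k₁, hk₁, hsub⟩ := STEP i m K L _ h' hf'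
      have hsub' : (List.replicate x true ++ u).Sublist
          (List.replicate 1 false ++ (AB k₁ ++ (List.replicate K false ++ List.replicate L true))) := by
        simpa using hsub
      obtain ⟨k, hk, hs⟩ := ih 1 k₁ u hx1 hsub' hf
      exact ⟨k, by omega, hs⟩

/-- a `true` preceded by `x` falses and followed (inside) by a false:
    locate it in the AB block. -/
lemma FLem (n K L x : ℕ) (u : List Bool)
    (h : (List.replicate x false ++ true :: u).Sublist
      (List.replicate (n+1) false ++ (AB n ++ (List.replicate K false ++ List.replicate L true))))
    (hf : false ∈ u) :
    ∃ k, k < n ∧ x + k ≤ 2*n ∧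
      u.Sublist (false :: AB k ++ (List.replicate K false ++ List.replicate L true)) := by
  obtain ⟨X1, X2, heq, hX1, hX2⟩ := List.append_sublist_iff.mp h
  obtain ⟨w1, w2, heq2, hu⟩ := first_occ _ u hX2
  have heq3 : (X1 ++ w1) ++ true :: w2
      = List.replicate (n+1) false ++ (AB n ++ (List.replicate K false ++ List.replicate L true)) := by
    rw [heq, heq2]; simp
  obtain ⟨P₁, hP₁, h2⟩ := repSplit (by simp) (n+1) _ _ w2 heq3
  rcases A3M n _ P₁ w2 h2 with ⟨k, hk, hPk, hS⟩ | ⟨P', hP', h3⟩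
  · refine ⟨k, hk, ?_, by rw [hS] at hu; simpa using hu⟩
    have hx : x ≤ count false X1 := by
      have := hX1.count_le false
      simpa using this
    have hcnt : count false (X1 ++ w1) = (n+1) + (n - 1 - k) := by
      rw [hP₁, hPk]
      simp [List.count_append, count_false_AB]
    have : count false X1 ≤ count false (X1 ++ w1) := by
      simp [List.count_append]
    omega
  · exfalso
    obtain ⟨P'', _, h4⟩ := repSplit (by simp) K _ P' w2 h3
    have hw2 : w2 = List.replicate (L - (P''.length + 1)) true := by
      have h6 := congrArg (List.drop (P''.length + 1)) h4
      have h5 : List.drop (P''.length + 1) P'' = [] := List.drop_eq_nil_of_le (by omega)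
      simpa [List.drop_append, List.drop_replicate, h5] using h6
    have hmem : false ∈ w2 := hu.subset hf
    rw [hw2] at hmem
    exact absurd (List.eq_of_mem_replicate hmem) (by simp)

lemma bool_ne (d c : Bool) (h : ¬ d = c) : d = !c := by cases c <;> cases d <;> simp_all

lemma pal_decomp (v : List Bool) (hp : v.reverse = v) (hf : false ∈ v) (ht : true ∈ v) :
    ∃ (c : Bool) (x : ℕ) (mid : List Bool), 1 ≤ x ∧
      v = List.replicate x c ++ mid ++ List.replicate x c ∧
      mid.head? = some (!c) ∧ mid.reverse.head? = some (!c) := by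
  have hne : v ≠ [] := by rintro rfl; simp at hf
  obtain ⟨c, t0, rfl⟩ : ∃ c t0, v = c :: t0 := by
    cases v with
    | nil => exact absurd rfl hne
    | cons a b => exact ⟨a, b, rfl⟩
  obtain ⟨x, rest, hx, hv, hrh⟩ := run_extract (c :: t0) c rfl
  have hrne : rest ≠ [] := by
    rintro rfl
    rw [List.append_nil] at hv
    rw [hv] at hf ht
    have := List.eq_of_mem_replicate hf
    have := List.eq_of_mem_replicate ht
    simp_all
  obtain ⟨d, t', rfl⟩ : ∃ d t', rest = d :: t' := by
    cases rest with
    | nil => exact absurd rfl hrne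
    | cons a b => exact ⟨a, b, rfl⟩
  have hd : d = !c := bool_ne _ _ (by intro h; rw [h] at hrh; exact hrh rfl)
  subst hd
  have E : ((!c) :: t').reverse ++ List.replicate x c = List.replicate x c ++ ((!c) :: t') := by
    conv_rhs => rw [← hv]
    rw [← hp, hv]
    simp [List.reverse_append]
  have hr : x ≤ ((!c) :: t').length := by
    by_contra hlt
    push_neg at hlt
    have h6 := congrArg (List.drop (((!c) :: t').length)) E
    rw [show List.drop (((!c) :: t').length) (((!c) :: t').reverse ++ List.replicate x c)
         = List.replicate x c from List.drop_left' (by simp)] at h6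
    rw [List.drop_append, List.drop_replicate] at h6
    have h0 : ((!c) :: t').length - (List.replicate x c).length = 0 := by
      simp only [List.length_replicate]; omega
    rw [h0, List.drop_zero] at h6
    have hmem : (!c) ∈ List.replicate x c := by
      rw [h6]; exact List.mem_append_right _ (by simp)
    have := List.eq_of_mem_replicate hmem
    simp at this
  have h6 := congrArg (List.drop x) E
  rw [show List.drop x (List.replicate x c ++ ((!c) :: t')) = (!c) :: t'
        from List.drop_left' (by simp)] at h6
  rw [List.drop_append] at h6
  have h0 : x - (((!c) :: t').reverse).length = 0 := by
    simp only [List.length_reverse]; omega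
  rw [h0, List.drop_zero] at h6
  obtain ⟨mid, hrest⟩ : ∃ mid, (!c) :: t' = mid ++ List.replicate x c := ⟨_, h6.symm⟩
  have hmidne : mid ≠ [] := by
    rintro rfl
    rw [List.nil_append] at hrest
    have hmem : (!c) ∈ List.replicate x c := by rw [← hrest]; simp
    have := List.eq_of_mem_replicate hmem
    simp at this
  have hhead : mid.head? = some (!c) := by
    cases mid with
    | nil => exact absurd rfl hmidne
    | cons m0 mt =>
      rw [List.cons_append] at hrest
      simp only [List.cons.injEq] at hrest
      simp [hrest.1]
  have hvfull : (c :: t0) = List.replicate x c ++ mid ++ List.replicate x c := by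
    rw [hv, hrest]; simp
  have hmidpal : mid.reverse = mid := by
    have h7 : List.replicate x c ++ mid.reverse ++ List.replicate x c
        = List.replicate x c ++ mid ++ List.replicate x c := by
      conv_rhs => rw [← hvfull, ← hp, hvfull]
      simp [List.reverse_append, List.append_assoc]
    have h8 := List.append_cancel_right h7
    exact List.append_cancel_left h8
  exact ⟨c, x, mid, hx, hvfull, hhead, by rw [hmidpal]; exact hhead⟩

lemma antipal_decomp (v : List Bool) (hp : v.map (!·) = v.reverse) (hne : v ≠ []) :
    ∃ (c : Bool) (x : ℕ) (mid : List Bool), 1 ≤ x ∧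
      v = List.replicate x c ++ mid ++ List.replicate x (!c) ∧
      (mid = [] ∨ (mid.head? = some (!c) ∧ mid.reverse.head? = some c)) := by
  obtain ⟨c, t0, rfl⟩ : ∃ c t0, v = c :: t0 := by
    cases v with
    | nil => exact absurd rfl hne
    | cons a b => exact ⟨a, b, rfl⟩
  obtain ⟨x, rest, hx, hv, hrh⟩ := run_extract (c :: t0) c rfl
  -- map/reverse forms
  have E : List.replicate x (!c) ++ rest.map (!·) = rest.reverse ++ List.replicate x c := by
    have := hp
    rw [hv] at this
    simpa [List.reverse_append, List.map_replicate] using this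
  have E2 : List.replicate x c ++ rest = (rest.map (!·)).reverse ++ List.replicate x (!c) := by
    have h9 : ((c :: t0).map (!·)).reverse = c :: t0 := by rw [hp]; simp
    rw [hv] at h9
    rw [← h9]
    simp [List.reverse_append, List.map_replicate]
  have hr : x ≤ rest.length := by
    by_contra hlt
    push_neg at hlt
    have h6 := congrArg (List.drop rest.length) E
    rw [show List.drop rest.length (rest.reverse ++ List.replicate x c)
         = List.replicate x c from List.drop_left' (by simp)] at h6
    rw [List.drop_append, List.drop_replicate] at h6
    have h0 : rest.length - (List.replicate x (!c)).length = 0 := by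
      simp only [List.length_replicate]; omega
    rw [h0, List.drop_zero] at h6
    have hmem : (!c) ∈ List.replicate x c := by
      rw [← h6]
      exact List.mem_append_left _ (by simp; omega)
    have := List.eq_of_mem_replicate hmem
    simp at this
  have h6 := congrArg (List.drop x) E2
  rw [show List.drop x (List.replicate x c ++ rest) = rest
        from List.drop_left' (by simp)] at h6
  rw [List.drop_append] at h6
  have h0 : x - ((rest.map (!·)).reverse).length = 0 := by
    simp only [List.length_reverse, List.length_map]; omega
  rw [h0, List.drop_zero] at h6
  obtain ⟨mid, hrest⟩ : ∃ mid, rest = mid ++ List.replicate x (!c) := ⟨_, h6⟩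
  have hvfull : (c :: t0) = List.replicate x c ++ mid ++ List.replicate x (!c) := by
    rw [hv, hrest]; simp
  refine ⟨c, x, mid, hx, hvfull, ?_⟩
  rcases eq_or_ne mid [] with hm | hmidne
  · exact Or.inl hm
  right
  have hhead : mid.head? = some (!c) := by
    cases mid with
    | nil => exact absurd rfl hmidne
    | cons m0 mt =>
      rw [List.cons_append] at hrest
      have hh : rest.head? ≠ some c := hrh
      rw [hrest] at hh
      simp only [List.head?_cons] at hh
      have := bool_ne m0 c (by intro h; exact hh (by rw [h]))
      simp [this]
  have hmidanti : mid.map (!·) = mid.reverse := by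
    have h7 : List.replicate x (!c) ++ mid.map (!·) ++ List.replicate x c
        = List.replicate x (!c) ++ mid.reverse ++ List.replicate x c := by
      have hmap := hp
      rw [hvfull] at hmap
      simpa [List.reverse_append, List.map_replicate, List.map_append, List.append_assoc]
        using hmap
    exact List.append_cancel_left (List.append_cancel_right h7)
  have : mid.reverse.head? = (mid.head?).map (!·) := by
    rw [← hmidanti, List.head?_map]
  rw [this, hhead]
  simp


lemma rev_head_append_rep (Y : List Bool) (x : ℕ) (c : Bool) (hx : 1 ≤ x) :
    ((Y ++ List.replicate x c).reverse).head? = some c := by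
  obtain ⟨y, rfl⟩ : ∃ y, x = y + 1 := ⟨x - 1, by omega⟩
  rw [List.reverse_append, List.reverse_replicate, List.replicate_succ]
  rfl

lemma W_eq1 (n : ℕ) : W n = List.replicate (n+1) false ++
    (AB n ++ (List.replicate (2*n+1) false ++ List.replicate (2*n+1) true)) := by
  rw [W, AB_join]; simp [List.append_assoc]

lemma count_true_W (n : ℕ) : count true (W n) = 3*n+1 := by
  rw [W_eq1]; simp [List.count_append, List.count_replicate, count_true_AB]; omega

lemma count_false_W (n : ℕ) : count false (W n) = 4*n+2 := by
  rw [W_eq1]; simp [List.count_append, List.count_replicate, count_false_AB]; omega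

lemma key (n : ℕ) (v : List Bool) (hs : v.Sublist (W n))
    (h : v.reverse = v ∨ v.map (!·) = v.reverse) : v.length ≤ 4*n+2 := by
  have hct : count true v ≤ 3*n+1 := by
    have := hs.count_le true; rwa [count_true_W] at this
  have hcf : count false v ≤ 4*n+2 := by
    have := hs.count_le false; rwa [count_false_W] at this
  rcases h with hp | hp
  · -- palindrome
    by_cases hf : false ∈ v
    swap
    · rw [length_count, List.count_eq_zero_of_not_mem hf]; omega
    by_cases ht : true ∈ v
    swap
    · rw [length_count, List.count_eq_zero_of_not_mem ht]; omega
    obtain ⟨c, x, mid, hx, hveq, hh, hl⟩ := pal_decomp v hp hf ht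
    have hlenv : v.length = x + mid.length + x := by
      rw [hveq]; simp; omega
    cases c with
    | true =>
      -- v = a^x mid a^x , mid starts and ends with b
      have hfu : false ∈ mid ++ List.replicate x true := by
        cases mid with
        | nil => simp at hh
        | cons m0 mt => simp at hh; simp [hh]
      have hsW := hs
      rw [hveq, W_eq1 n] at hsW
      have hs' : (List.replicate x true ++ (mid ++ List.replicate x true)).Sublist
          (List.replicate (n+1) false ++
            (AB n ++ (List.replicate (2*n+1) false ++ List.replicate (2*n+1) true))) := by
        simpa [List.append_assoc] using hsW
      obtain ⟨k, hk, hu⟩ := abLoop (2*n+1) (2*n+1) x (n+1) n _ hx hs' hfu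
      have hmidsub : mid.Sublist (false :: AB k ++ List.replicate (2*n+1) false) := by
        have h1 : mid.Sublist (mid ++ List.replicate x true) := List.sublist_append_left _ _
        have h2 : mid.Sublist ((false :: AB k ++ List.replicate (2*n+1) false) ++
            List.replicate (2*n+1) true) := by
          simpa [List.append_assoc] using h1.trans hu
        exact trim_last (2*n+1) _ _ h2 (by rw [hl]; simp)
      have hct' : count true mid ≤ k := by
        have := hmidsub.count_le true
        simp [List.count_append, List.count_replicate, count_true_AB] at this
        omega
      have hcf' : count false mid ≤ 1 + k + (2*n+1) := by
        have := hmidsub.count_le false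
        simp [List.count_append, List.count_replicate, count_false_AB] at this
        omega
      rw [hlenv, length_count mid]; omega
    | false =>
      -- v = b^x mid b^x , mid starts and ends with a
      obtain ⟨t, rfl⟩ : ∃ t, mid = true :: t := by
        cases mid with
        | nil => simp at hh
        | cons m0 mt => simp at hh; exact ⟨mt, by rw [hh]⟩
      have hsW := hs
      rw [hveq, W_eq1 n] at hsW
      have hs' : (List.replicate x false ++ true :: (t ++ List.replicate x false)).Sublist
          (List.replicate (n+1) false ++
            (AB n ++ (List.replicate (2*n+1) false ++ List.replicate (2*n+1) true))) := by
        simpa [List.append_assoc] using hsW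
      have hfu : false ∈ t ++ List.replicate x false := by
        refine List.mem_append_right _ ?_
        simp; omega
      obtain ⟨k, hk, hxk, hu⟩ := FLem n (2*n+1) (2*n+1) x _ hs' hfu
      have htu : t.Sublist (t ++ List.replicate x false) := List.sublist_append_left _ _
      rcases eq_or_ne t [] with rfl | htne
      · simp at hlenv; rw [hlenv]; omega
      · have htrev : t.reverse.head? = some true := by
          have h9 : ((true :: t).reverse).head? = some true := by rw [hl]; rfl
          rw [List.reverse_cons] at h9
          cases hcase : t.reverse with
          | nil => simp_all
          | cons a b =>
            rw [hcase] at h9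
            simp only [List.cons_append, List.head?_cons, Option.some.injEq] at h9
            simp [h9]
        have hurev : ((t ++ List.replicate x false).reverse).head? = some false :=
          rev_head_append_rep t x false hx
        have hu0 : (t ++ List.replicate x false).Sublist
            ((false :: AB k ++ List.replicate (2*n+1) false) ++
              List.replicate (2*n+1) true) := by
          simpa [List.append_assoc] using hu
        have hu1 : (t ++ List.replicate x false).Sublist
            (false :: AB k ++ List.replicate (2*n+1) false) :=
          trim_last (2*n+1) _ _ hu0 (by rw [hurev]; simp)
        have ht1 : t.Sublist (false :: AB k ++ List.replicate (2*n+1) false) := htu.trans hu1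
        have ht2 : t.Sublist (false :: AB k) :=
          trim_last (2*n+1) _ _ (by simpa using ht1) (by rw [htrev]; simp)
        have hlt : t.length ≤ 1 + 2*k := by
          have := ht2.length_le
          simp [length_AB] at this
          omega
        rw [hlenv]; simp; omega
  · -- antipalindrome
    rcases eq_or_ne v [] with rfl | hne
    · simp
    have hcc : count true v = count false v := by
      have h1 : count true v.reverse = count true v := List.count_reverse
      rw [← hp, count_map_not] at h1
      omega
    have hlen2 : v.length = 2 * count true v := by rw [length_count]; omega
    obtain ⟨c, x, mid, hx, hveq, hmid⟩ := antipal_decomp v hp hne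
    cases c with
    | true =>
      -- ends with b^x : trim the a-block, then count true ≤ n
      have hrev : v.reverse.head? = some false := by
        rw [hveq]
        simpa using rev_head_append_rep (List.replicate x true ++ mid) x (!true) hx
      have hs0 : v.Sublist ((List.replicate (n+1) false ++ (AB n ++ List.replicate (2*n+1) false)) ++
          List.replicate (2*n+1) true) := by
        rw [W_eq1] at hs
        simpa [List.append_assoc] using hs
      have hvX : v.Sublist (List.replicate (n+1) false ++ (AB n ++ List.replicate (2*n+1) false)) :=
        trim_last (2*n+1) _ _ hs0 (by rw [hrev]; simp)
      have : count true v ≤ n := by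
        have := hvX.count_le true
        simp [List.count_append, List.count_replicate, count_true_AB] at this
        omega
      omega
    | false =>
      rcases hmid with rfl | ⟨hh, hl⟩
      · -- v = b^x a^x
        simp only [List.append_nil] at hveq
        rw [hveq] at hs
        rw [W_eq1] at hs
        have hs2 : (List.replicate x false ++ List.replicate x true).Sublist
            ((List.replicate (n+1) false ++ (AB n ++ List.replicate (2*n+1) false)) ++
              List.replicate (2*n+1) true) := by
          simpa [List.append_assoc] using hs
        obtain ⟨s1, s2, hv12, hs1, hs2'⟩ := List.sublist_append_iff.mp hs2
        obtain ⟨z, hz, rfl⟩ := List.sublist_replicate_iff.mp hs2'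
        have hlenx : v.length = 2*x := by rw [hveq]; simp; omega
        by_cases hxz : x ≤ z
        · omega
        · push_neg at hxz
          have hs1len : s1.length = x + (x - z) := by
            have := congrArg List.length hv12
            simp at this; omega
          have hs1eq : s1 = List.replicate x false ++ List.replicate (x - z) true := by
            have h7 := congrArg (List.take (x + (x - z))) hv12
            rw [List.take_append, List.take_replicate] at h7
            rw [show min (x + (x - z)) x = x by omega] at h7
            rw [show x + (x - z) - (List.replicate x false).length = x - z by simp] at h7
            rw [List.take_replicate, show min (x - z) x = x - z by omega] at h7
            rw [← hs1len] at h7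
            rw [List.take_append, List.take_length, Nat.sub_self,
              List.take_zero, List.append_nil] at h7
            exact h7.symm
          have hs1rev : s1.reverse.head? = some true := by
            rw [hs1eq]; exact rev_head_append_rep _ _ _ (by omega)
          have hs10 : s1.Sublist ((List.replicate (n+1) false ++ AB n) ++
              List.replicate (2*n+1) false) := by
            simpa [List.append_assoc] using hs1
          have hs1' : s1.Sublist (List.replicate (n+1) false ++ AB n) :=
            trim_last (2*n+1) _ _ hs10 (by rw [hs1rev]; simp)
          have hb1 : count false s1 ≤ 2*n+1 := by
            have := hs1'.count_le false
            simp [List.count_append, List.count_replicate, count_false_AB] at this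
            omega
          have hb2 : count false s1 = x := by
            rw [hs1eq]; simp [List.count_append, List.count_replicate]
          omega
      · -- v = b^x mid a^x with mid = a ... b
        obtain ⟨t, rfl⟩ : ∃ t, mid = true :: t := by
          cases mid with
          | nil => simp at hh
          | cons m0 mt => simp at hh; exact ⟨mt, by rw [hh]⟩
        have htne : t ≠ [] := by
          rintro rfl; simp at hl
        have htrev : t.reverse.head? = some false := by
          have h9 : ((true :: t).reverse).head? = some false := hl
          rw [List.reverse_cons] at h9
          cases hcase : t.reverse with
          | nil => simp_all
          | cons a b =>
            rw [hcase] at h9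
            simp only [List.cons_append, List.head?_cons, Option.some.injEq] at h9
            simp [h9]
        have hft : false ∈ t := by
          have : false ∈ t.reverse := by
            cases hcase : t.reverse with
            | nil => simp [hcase] at htrev
            | cons a b => rw [hcase] at htrev; simp at htrev; simp [hcase, htrev]
          simpa using this
        have hsW := hs
        rw [hveq, W_eq1 n] at hsW
        have hs' : (List.replicate x false ++ true :: (t ++ List.replicate x true)).Sublist
            (List.replicate (n+1) false ++
              (AB n ++ (List.replicate (2*n+1) false ++ List.replicate (2*n+1) true))) := by
          simpa [List.append_assoc] using hsW
        have hfu : false ∈ t ++ List.replicate x true := List.mem_append_left _ hft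
        obtain ⟨k, hk, hxk, hu⟩ := FLem n (2*n+1) (2*n+1) x _ hs' hfu
        have htu : t.Sublist (t ++ List.replicate x true) := List.sublist_append_left _ _
        have ht0 : t.Sublist ((false :: AB k ++ List.replicate (2*n+1) false) ++
            List.replicate (2*n+1) true) := by
          simpa [List.append_assoc] using htu.trans hu
        have ht1 : t.Sublist (false :: AB k ++ List.replicate (2*n+1) false) :=
          trim_last (2*n+1) _ _ ht0 (by rw [htrev]; simp)
        have hctt : count true t ≤ k := by
          have := ht1.count_le true
          simp [List.count_append, List.count_replicate, count_true_AB] at this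
          omega
        have hctv : count true v = 1 + count true t + x := by
          rw [hveq]; simp [List.count_append, List.count_replicate]; omega
        omega


theorem sd_W_lower (n : ℕ) : (W n).length = 7*n + 3 ∧ 3*n + 1 ≤ Sd (W n) := by
  have hlen : (W n).length = 7*n+3 := by
    rw [length_count, count_true_W, count_false_W]; omega
  refine ⟨hlen, ?_⟩
  rw [Sd]
  apply le_csInf
  · exact ⟨(W n).length, [], List.nil_sublist _, Or.inl rfl, by simp⟩
  · rintro k ⟨v, hsub, hpa, hk⟩
    have hb : v.length ≤ 4*n+2 := by
      refine key n v hsub ?_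
      rcases hpa with h | h
      · exact Or.inl h
      · exact Or.inr h
    rw [hlen] at hk
    omega
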